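/- Let σ ∈ S_n and 1 ≤ i ≤ n-1 with s_i = (i, i+1). If σ(n) < σ(1) and des(s_i σ s_i⁻¹) - des(σ) = 2, then (s_i σ s_i⁻¹)(n) < (s_i σ s_i⁻¹)(1). -/

import Mathlib

/-- Descent number: number of positions `i` (0-indexed, `i+1 < n`) with `π(i) > π(i+1)`. -/
def des {n : ℕ} (π : Equiv.Perm (Fin n)) : ℕ :=
  (Finset.univ.filter (fun i : Fin (n - 1) =>
    π ⟨i.1 + 1, by have := i.2; omega⟩ < π ⟨i.1, by have := i.2; omega⟩)).card

/-- Cyclic descent number: positions taken cyclically, with `π(n+1) := π(1)`. -/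
def cdes {n : ℕ} (π : Equiv.Perm (Fin n)) : ℕ :=
  (Finset.univ.filter (fun i : Fin n =>
    π ⟨(i.1 + 1) % n, Nat.mod_lt _ (by have := i.2; omega)⟩ < π i)).card
lemma swap_lt_aux {n i : ℕ} (hi : i + 1 < n) {x y : Fin n} (hxy : x < y)
    (h : Equiv.swap (⟨i, Nat.lt_of_succ_lt hi⟩ : Fin n) ⟨i+1, hi⟩ y <
         Equiv.swap (⟨i, Nat.lt_of_succ_lt hi⟩ : Fin n) ⟨i+1, hi⟩ x) :
    x = (⟨i, Nat.lt_of_succ_lt hi⟩ : Fin n) ∧ y = (⟨i+1, hi⟩ : Fin n) := by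
  rw [Equiv.swap_apply_def, Equiv.swap_apply_def] at h
  constructor <;> ext <;>
  · split_ifs at h <;>
      first
      | rfl
      | (rw [Fin.lt_def] at h hxy
         simp only [Fin.ext_iff] at *
         omega)
lemma cdes_swap_mul {n i : ℕ} (hi : i + 1 < n) (μ : Equiv.Perm (Fin n)) :
    cdes (Equiv.swap (⟨i, Nat.lt_of_succ_lt hi⟩ : Fin n) ⟨i+1, hi⟩ * μ) ≤ cdes μ + 1 := by
  set s := Equiv.swap (⟨i, Nat.lt_of_succ_lt hi⟩ : Fin n) ⟨i+1, hi⟩ with hs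
  unfold cdes
  apply le_trans (Finset.card_le_card (?_ :
    _ ⊆ (Finset.univ.filter (fun j : Fin n =>
      μ ⟨(j.1 + 1) % n, Nat.mod_lt _ (by have := j.2; omega)⟩ < μ j)) ∪ {μ.symm ⟨i, Nat.lt_of_succ_lt hi⟩}))
  · apply le_trans (Finset.card_union_le _ _); simp
  · intro j hj
    simp only [Finset.mem_filter, Finset.mem_univ, true_and] at hj
    simp only [Equiv.Perm.mul_apply] at hj
    simp only [Finset.mem_union, Finset.mem_filter, Finset.mem_univ, true_and,
      Finset.mem_singleton]
    by_cases hB : μ ⟨(j.1 + 1) % n, Nat.mod_lt _ (by have := j.2; omega)⟩ < μ j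
    · exact Or.inl hB
    · right
      have hne : μ j ≠ μ ⟨(j.1 + 1) % n, Nat.mod_lt _ (by have := j.2; omega)⟩ := by
        intro h; rw [h] at hj; exact lt_irrefl _ hj
      have hxy : μ j < μ ⟨(j.1 + 1) % n, Nat.mod_lt _ (by have := j.2; omega)⟩ :=
        lt_of_le_of_ne (not_lt.mp hB) hne
      have := (swap_lt_aux hi hxy hj).1
      rw [← this, Equiv.symm_apply_apply]
lemma cdes_mul_swap {n i : ℕ} (hi : i + 1 < n) (hn : 3 ≤ n) (σ : Equiv.Perm (Fin n)) :
    cdes (σ * Equiv.swap (⟨i, Nat.lt_of_succ_lt hi⟩ : Fin n) ⟨i+1, hi⟩) ≤ cdes σ + 1 := by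
  have hn0 : 0 < n := by omega
  set i' : Fin n := ⟨i, Nat.lt_of_succ_lt hi⟩ with hi'
  set i1' : Fin n := ⟨i+1, hi⟩ with hi1'
  set s := Equiv.swap i' i1' with hs
  set nx : Fin n → Fin n := fun j => ⟨(j.1+1) % n, Nat.mod_lt _ hn0⟩ with hnx
  set im1 : Fin n := if i = 0 then ⟨n-1, by omega⟩ else ⟨i-1, by omega⟩ with him1
  have hsl : s i' = i1' := Equiv.swap_apply_left _ _
  have hsr : s i1' = i' := Equiv.swap_apply_right _ _
  have hnx_im1 : nx im1 = i' := by
    by_cases h0 : i = 0 <;> apply Fin.ext <;> simp only [him1, h0, if_true, if_false, hnx, hi']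
    · rw [Nat.sub_add_cancel (by omega), Nat.mod_self]
    · rw [Nat.sub_add_cancel (by omega), Nat.mod_eq_of_lt (by omega)]
  have hnx_i' : nx i' = i1' := by
    apply Fin.ext; simp only [hnx, hi', hi1']
    exact Nat.mod_eq_of_lt (by omega)
  have hnx_eq_im1 : ∀ j : Fin n, nx j = i' → j = im1 := by
    intro j h
    rw [Fin.ext_iff] at h ⊢
    simp only [hnx, hi'] at h
    by_cases hj1 : j.1 + 1 = n
    · rw [hj1, Nat.mod_self] at h
      simp only [him1, ← h, if_true]; omega
    · rw [Nat.mod_eq_of_lt (by have := j.2; omega)] at h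
      have h0 : i ≠ 0 := by omega
      simp only [him1, h0, if_false]; omega
  have hnx_eq_i' : ∀ j : Fin n, nx j = i1' → j = i' := by
    intro j h
    rw [Fin.ext_iff] at h ⊢
    simp only [hnx, hi', hi1'] at h ⊢
    by_cases hj1 : j.1 + 1 = n
    · rw [hj1, Nat.mod_self] at h; omega
    · rw [Nat.mod_eq_of_lt (by have := j.2; omega)] at h; omega
  have him1_ne1 : im1 ≠ i' := by
    simp only [ne_eq, Fin.ext_iff]; by_cases h0 : i = 0 <;> simp [him1, h0, hi'] <;> omega
  have him1_ne2 : im1 ≠ i1' := by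
    simp only [ne_eq, Fin.ext_iff]; by_cases h0 : i = 0 <;> simp [him1, h0, hi1'] <;> omega
  have hs_im1 : s im1 = im1 := Equiv.swap_apply_of_ne_of_ne him1_ne1 him1_ne2
  have hs_nxi1 : s (nx i1') = nx i1' := by
    apply Equiv.swap_apply_of_ne_of_ne
    · intro h; exact him1_ne2.symm (by rw [← hnx_eq_im1 _ h])
    · intro h
      have := hnx_eq_i' _ h
      rw [Fin.ext_iff] at this; simp [hi', hi1'] at this
  have hfix : ∀ j : Fin n, j ≠ im1 → j ≠ i' → j ≠ i1' → s j = j ∧ s (nx j) = nx j := by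
    intro j h1 h2 h3
    refine ⟨Equiv.swap_apply_of_ne_of_ne h2 h3, Equiv.swap_apply_of_ne_of_ne ?_ ?_⟩
    · intro h; exact h1 (hnx_eq_im1 _ h)
    · intro h; exact h2 (hnx_eq_i' _ h)
  -- the two filter sets
  set A := Finset.univ.filter (fun j : Fin n => (σ * s) (nx j) < (σ * s) j) with hA
  set B := Finset.univ.filter (fun j : Fin n => σ (nx j) < σ j) with hB
  have mA : ∀ j, j ∈ A ↔ σ (s (nx j)) < σ (s j) := by
    intro j; rw [hA, Finset.mem_filter]; simp [Equiv.Perm.mul_apply]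
  have mB : ∀ j, j ∈ B ↔ σ (nx j) < σ j := by intro j; simp [hB]
  have goal_eq : cdes (σ * s) = A.card ∧ cdes σ = B.card := ⟨rfl, rfl⟩
  rw [goal_eq.1, goal_eq.2]
  by_cases hbc : σ i' < σ i1'
  · -- A ⊆ B ∪ {i'}
    have hsub : A ⊆ B ∪ {i'} := by
      intro j hj
      rw [Finset.mem_union, Finset.mem_singleton]
      by_cases hji : j = i'
      · exact Or.inr hji
      left
      by_cases hjm : j = im1
      · subst hjm
        rw [mA, hnx_im1, hs_im1, hsl] at hj
        rw [mB, hnx_im1]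
        exact lt_trans hbc hj
      by_cases hj1 : j = i1'
      · subst hj1
        rw [mA, hs_nxi1, hsr] at hj
        rw [mB]
        exact lt_trans hj hbc
      · obtain ⟨e1, e2⟩ := hfix j hjm hji hj1
        rw [mA, e1, e2] at hj
        rw [mB]; exact hj
    calc A.card ≤ (B ∪ {i'}).card := Finset.card_le_card hsub
      _ ≤ B.card + 1 := le_trans (Finset.card_union_le _ _) (by simp)
  · have hne : σ i1' ≠ σ i' := by
      intro h
      have := σ.injective h
      rw [Fin.ext_iff] at this; simp [hi', hi1'] at this
    have hcb : σ i1' < σ i' := lt_of_le_of_ne (not_lt.mp hbc) hne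
    have hiA : i' ∉ A := by
      rw [mA, hnx_i', hsr, hsl]
      exact fun h => hbc h
    have hiB : i' ∈ B := by rw [mB, hnx_i']; exact hcb
    have hsub : A ⊆ (A ∩ B) ∪ {im1, i1'} := by
      intro j hj
      rw [Finset.mem_union, Finset.mem_insert, Finset.mem_singleton]
      by_cases hjm : j = im1
      · exact Or.inr (Or.inl hjm)
      by_cases hj1 : j = i1'
      · exact Or.inr (Or.inr hj1)
      by_cases hji : j = i'
      · exact absurd (hji ▸ hj) hiA
      · obtain ⟨e1, e2⟩ := hfix j hjm hji hj1
        left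
        rw [Finset.mem_inter]
        refine ⟨hj, ?_⟩
        rw [mA, e1, e2] at hj
        rw [mB]; exact hj
    have h1 : A.card ≤ (A ∩ B).card + 2 :=
      le_trans (Finset.card_le_card hsub)
        (le_trans (Finset.card_union_le _ _)
          (by have := Finset.card_insert_le im1 ({i1'} : Finset (Fin n)); simp at this ⊢; omega))
    have h2 : (A ∩ B).card + 1 ≤ B.card := by
      have hins : insert i' (A ∩ B) ⊆ B := by
        intro x hx
        rcases Finset.mem_insert.mp hx with h | h
        · exact h ▸ hiB
        · exact (Finset.mem_inter.mp h).2
      have hnotmem : i' ∉ A ∩ B := fun h => hiA (Finset.mem_inter.mp h).1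
      calc (A ∩ B).card + 1 = (insert i' (A ∩ B)).card :=
            (Finset.card_insert_of_notMem hnotmem).symm
        _ ≤ B.card := Finset.card_le_card hins
    omega
lemma cdes_eq_des {m : ℕ} (π : Equiv.Perm (Fin (m+2))) :
    cdes π = des π +
      (if π ⟨0, by omega⟩ < π ⟨m+1, by omega⟩ then 1 else 0) := by
  unfold cdes des
  rw [Finset.card_filter, Finset.card_filter]
  rw [Fin.sum_univ_castSucc (n := m+1)]
  congr 1
  · apply Finset.sum_congr rfl
    intro j _
    have h1 : (⟨((Fin.castSucc j).1 + 1) % (m+2), Nat.mod_lt _ (by omega)⟩ : Fin (m+2)) =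
        ⟨j.1 + 1, by have := j.2; omega⟩ := by
      apply Fin.ext
      simp only [Fin.coe_castSucc]
      exact Nat.mod_eq_of_lt (by have := j.2; omega)
    rw [h1]
    rfl
  · have h2 : (⟨((Fin.last (m+1)).1 + 1) % (m+2), Nat.mod_lt _ (by omega)⟩ : Fin (m+2)) =
        ⟨0, by omega⟩ := by
      apply Fin.ext
      simp [Fin.last]
    rw [h2]
    rfl

theorem conj_last_lt_first {n : ℕ} (σ : Equiv.Perm (Fin n)) (i : ℕ) (hi : i + 1 < n) :
    let s := Equiv.swap (⟨i, by omega⟩ : Fin n) ⟨i + 1, hi⟩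
    σ ⟨n - 1, by omega⟩ < σ ⟨0, by omega⟩ →
    des (s * σ * s⁻¹) = des σ + 2 →
    (s * σ * s⁻¹) ⟨n - 1, by omega⟩ < (s * σ * s⁻¹) ⟨0, by omega⟩ := by
  intro s hlt h2
  have hdes_le : des (s * σ * s⁻¹) ≤ n - 1 := by
    refine le_trans (Finset.card_filter_le _ _) ?_
    simp
  have hn3 : 3 ≤ n := by omega
  obtain ⟨m, rfl⟩ : ∃ m, n = m + 2 := ⟨n - 2, by omega⟩
  have hss : s * σ * s⁻¹ = s * (σ * s) := by
    have : s⁻¹ = s := Equiv.swap_inv _ _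
    rw [this, mul_assoc]
  have hc1 : cdes (σ * s) ≤ cdes σ + 1 := cdes_mul_swap hi hn3 σ
  have hc2 : cdes (s * (σ * s)) ≤ cdes (σ * s) + 1 := cdes_swap_mul hi _
  have hcτ : cdes (s * σ * s⁻¹) ≤ cdes σ + 2 := by rw [hss]; omega
  have e1 := cdes_eq_des σ
  have e2 := cdes_eq_des (s * σ * s⁻¹)
  have hlt' : σ ⟨m+1, by omega⟩ < σ ⟨0, by omega⟩ := hlt
  have hne : ¬ (σ ⟨0, by omega⟩ < σ ⟨m+1, by omega⟩) := asymm hlt'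
  rw [if_neg hne] at e1
  have h2' : des (s * σ * s⁻¹) = des σ + 2 := h2
  by_cases hend : (s * σ * s⁻¹) ⟨0, by omega⟩ < (s * σ * s⁻¹) ⟨m+1, by omega⟩
  · rw [if_pos hend] at e2
    omega
  · have hneq : (s * σ * s⁻¹) ⟨m+1, by omega⟩ ≠ (s * σ * s⁻¹) ⟨0, by omega⟩ := by
      intro h
      have := (s * σ * s⁻¹).injective h
      rw [Fin.ext_iff] at this
      simp at this
    show (s * σ * s⁻¹) ⟨m+1, by omega⟩ < (s * σ * s⁻¹) ⟨0, by omega⟩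
    exact lt_of_le_of_ne (not_lt.mp hend) hneq
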